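/- arXiv:1404.0151 — 3 statements merged into one kernel-verified Lean document; each statement's English description precedes it below -/
import Mathlib

section
/- Let G be a digraph with vertex b and I ⊆ V(G) \ {b} such that every finite subset of I can be linked to b by edge-disjoint directed paths. If D and D' are exact vertex sets, then there is no edge of G whose tail lies in D \ D' and whose head lies in D' \ D. -/
/-- A (finite) directed path in the digraph with adjacency `Adj`:
a nonempty list of distinct vertices whose consecutive pairs are edges. -/
structure DiPath {V : Type*} (Adj : V → V → Prop) : Type _ where
  verts : List V
  ne : verts ≠ []
  chain : verts.Chain' Adj
  nodup : verts.Nodup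

namespace DiPath
variable {V : Type*} {Adj : V → V → Prop}
/-- The first vertex of a directed path. -/
def first (P : DiPath Adj) : V := P.verts.head P.ne
/-- The last vertex of a directed path. -/
def last (P : DiPath Adj) : V := P.verts.getLast P.ne
/-- The (directed) edges of a path, as ordered pairs of consecutive vertices. -/
def edges (P : DiPath Adj) : List (V × V) := P.verts.zip P.verts.tail
/-- The edge set of a path. -/
def edgeSet (P : DiPath Adj) : Set (V × V) := {e | e ∈ P.edges}
/-- The vertex set of a path. -/
def vertexSet (P : DiPath Adj) : Set V := {v | v ∈ P.verts}
end DiPath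

/-- A directed ray: a one-way infinite directed path. -/
structure DiRay {V : Type*} (Adj : V → V → Prop) : Type _ where
  f : ℕ → V
  inj : Function.Injective f
  adj : ∀ n, Adj (f n) (f (n + 1))

namespace DiRay
variable {V : Type*} {Adj : V → V → Prop}
/-- The first vertex of a ray. -/
def first (R : DiRay Adj) : V := R.f 0
/-- The edge set of a ray. -/
def edgeSet (R : DiRay Adj) : Set (V × V) := Set.range fun n => (R.f n, R.f (n + 1))
/-- The vertex set of a ray. -/
def vertexSet (R : DiRay Adj) : Set V := Set.range R.f
end DiRay

/-- A path or a ray. -/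
inductive PR {V : Type*} (Adj : V → V → Prop) : Type _
  | path : DiPath Adj → PR Adj
  | ray : DiRay Adj → PR Adj

namespace PR
variable {V : Type*} {Adj : V → V → Prop}
/-- The first vertex. -/
def first : PR Adj → V
  | .path P => P.first
  | .ray R => R.first
/-- The edge set. -/
def edgeSet : PR Adj → Set (V × V)
  | .path P => P.edgeSet
  | .ray R => R.edgeSet
/-- The vertex set. -/
def vertexSet : PR Adj → Set V
  | .path P => P.vertexSet
  | .ray R => R.vertexSet
end PR

/-- A vertex `v` dominates `b` (edge version): there are infinitely many
pairwise edge-disjoint directed `v`–`b` paths. -/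
def VDom {V : Type*} (Adj : V → V → Prop) (b v : V) : Prop :=
  ∃ P : ℕ → DiPath Adj, Function.Injective P ∧ (∀ n, (P n).first = v) ∧
    (∀ n, (P n).last = b) ∧ ∀ m n, m ≠ n → Disjoint (P m).edgeSet (P n).edgeSet

/-- A ray `R` dominates `b` (edge version): there are infinitely many pairwise
edge-disjoint directed paths from `R` to `b`. -/
def RDom {V : Type*} (Adj : V → V → Prop) (b : V) (R : DiRay Adj) : Prop :=
  ∃ P : ℕ → DiPath Adj, Function.Injective P ∧ (∀ n, (P n).first ∈ R.vertexSet) ∧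
    (∀ n, (P n).last = b) ∧ ∀ m n, m ≠ n → Disjoint (P m).edgeSet (P n).edgeSet

/-- A path or ray is good for `b` if it ends at `b` or dominates `b`
(a path dominates `b` if its last vertex does; a ray dominates as a ray). -/
def PR.Good {V : Type*} {Adj : V → V → Prop} (b : V) : PR Adj → Prop
  | .path P => P.last = b ∨ VDom Adj b P.last
  | .ray R => RDom Adj b R

/-- A domination linkage (edge version) from `I` to `b`: pairwise edge-disjoint
paths or rays, one starting at each vertex of `I`, each ending at `b` or dominating `b`. -/
def DomLinkage {V : Type*} (Adj : V → V → Prop) (b : V) (I : Set V) : Prop :=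
  ∃ Q : I → PR Adj, (∀ v : I, (Q v).first = (v : V)) ∧ (∀ v, (Q v).Good b) ∧
    ∀ v w : I, v ≠ w → Disjoint (Q v).edgeSet (Q w).edgeSet

/-- The finite set `S` can be linked to `b` by pairwise edge-disjoint directed paths,
one starting at each vertex of `S`, each ending at `b`. -/
def FinLinked {V : Type*} (Adj : V → V → Prop) (b : V) (S : Finset V) : Prop :=
  ∃ P : S → DiPath Adj, (∀ s, (P s).first = (s : V)) ∧ (∀ s, (P s).last = b) ∧
    ∀ s t, s ≠ t → Disjoint (P s).edgeSet (P t).edgeSet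

/-- The set of `D`-crossing edges: edges with tail in `D` and head outside `D`. -/
def Cross {V : Type*} (Adj : V → V → Prop) (D : Set V) : Set (V × V) :=
  {e | Adj e.1 e.2 ∧ e.1 ∈ D ∧ e.2 ∉ D}

/-- `D` is exact (for `I` and `b`): `b ∉ D` and the number of `D`-crossing
edges is finite and equals `|D ∩ I|`. -/
def Exact {V : Type*} (Adj : V → V → Prop) (b : V) (I D : Set V) : Prop :=
  b ∉ D ∧ (Cross Adj D).Finite ∧ (D ∩ I).Finite ∧
    (Cross Adj D).ncard = (D ∩ I).ncard

/-!
Write `δ X` for the set of `X`-crossing edges. The count `|δ X|` is submodular, and strictly so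
when some edge runs from `D \ D'` to `D' \ D`: that edge lies in `δ D` but in neither
`δ (D ∩ D')` nor `δ (D ∪ D')`. On the other hand `|X ∩ I| ≤ |δ X|` whenever `b ∉ X`, since each of
the edge-disjoint paths from `X ∩ I` to `b` must leave `X`; and `|X ∩ I|` is modular in `X`.
For exact `D` and `D'` this gives
`|D ∩ I| + |D' ∩ I| ≤ |δ (D ∩ D')| + |δ (D ∪ D')| < |δ D| + |δ D'| = |D ∩ I| + |D' ∩ I|`.
-/

lemma exists_edge_leaving_of_isChain {V : Type*} {Adj : V → V → Prop} (X : Set V) :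
    ∀ (l : List V) (hl : l ≠ []), l.IsChain Adj → l.head hl ∈ X → l.getLast hl ∉ X →
      ∃ e ∈ l.zip l.tail, Adj e.1 e.2 ∧ e.1 ∈ X ∧ e.2 ∉ X
  | [], hl, _, _, _ => absurd rfl hl
  | [a], _, _, ha, ha' => absurd ha ha'
  | a :: c :: l, _, hchain, ha, hlast => by
    obtain ⟨hac, hchain⟩ := List.isChain_cons_cons.mp hchain
    by_cases hc : c ∈ X
    · obtain ⟨e, he, hcross⟩ := exists_edge_leaving_of_isChain X (c :: l) (List.cons_ne_nil _ _)
        hchain hc (by rwa [List.getLast_cons (List.cons_ne_nil _ _)] at hlast)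
      exact ⟨e, List.mem_cons_of_mem _ he, hcross⟩
    · exact ⟨(a, c), List.mem_cons_self, hac, ha, hc⟩

lemma DiPath.exists_mem_edgeSet_cross {V : Type*} {Adj : V → V → Prop} {X : Set V}
    (P : DiPath Adj) (hfirst : P.first ∈ X) (hlast : P.last ∉ X) :
    ∃ e ∈ P.edgeSet, e ∈ Cross Adj X :=
  exists_edge_leaving_of_isChain X P.verts P.ne P.chain hfirst hlast

lemma FinLinked.card_le_ncard_cross {V : Type*} {Adj : V → V → Prop} {b : V} {S : Finset V}
    (hS : FinLinked Adj b S) {X : Set V} (hSX : ↑S ⊆ X) (hbX : b ∉ X)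
    (hfin : (Cross Adj X).Finite) : S.card ≤ (Cross Adj X).ncard := by
  obtain ⟨P, hfirst, hlast, hdisj⟩ := hS
  have hleave : ∀ s : S, ∃ e ∈ (P s).edgeSet, e ∈ Cross Adj X := fun s =>
    (P s).exists_mem_edgeSet_cross (by rw [hfirst]; exact hSX s.2) (by rw [hlast]; exact hbX)
  choose e he hcross using hleave
  have : Finite (Cross Adj X) := hfin
  have hinj : Function.Injective fun s => (⟨e s, hcross s⟩ : Cross Adj X) := by
    intro s t hst
    by_contra hne
    have hest : e s = e t := congrArg Subtype.val hst
    exact Set.disjoint_left.mp (hdisj s t hne) (he s) (hest ▸ he t)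
  simpa only [Nat.card_eq_finsetCard, Nat.card_coe_set_eq] using
    Nat.card_le_card_of_injective _ hinj

lemma ncard_inter_le_ncard_cross {V : Type*} {Adj : V → V → Prop} {b : V} {I : Set V}
    (hlink : ∀ S : Finset V, ↑S ⊆ I → FinLinked Adj b S) {X : Set V} (hbX : b ∉ X)
    (hfin : (Cross Adj X).Finite) : (X ∩ I).ncard ≤ (Cross Adj X).ncard := by
  rcases (X ∩ I).finite_or_infinite with hXI | hXI
  · rw [← hXI.coe_toFinset, Set.ncard_coe_finset]
    refine (hlink _ ?_).card_le_ncard_cross ?_ hbX hfin <;>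
      simp only [hXI.coe_toFinset, Set.inter_subset_left, Set.inter_subset_right]
  · rw [hXI.ncard]
    exact Nat.zero_le _

lemma Set.ncard_add_ncard_lt_of_union_ssubset {α : Type*} {A B C E : Set α}
    (hunion : A ∪ B ⊂ C ∪ E) (hinter : A ∩ B ⊆ C ∩ E) (hC : C.Finite) (hE : E.Finite) :
    A.ncard + B.ncard < C.ncard + E.ncard := by
  have hCE : (C ∪ E).Finite := hC.union hE
  have hAB : (A ∪ B).Finite := hCE.subset hunion.subset
  rw [← Set.ncard_union_add_ncard_inter A B (hAB.subset Set.subset_union_left)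
      (hAB.subset Set.subset_union_right), ← Set.ncard_union_add_ncard_inter C E hC hE]
  exact Nat.add_lt_add_of_lt_of_le (Set.ncard_lt_ncard hunion hCE)
    (Set.ncard_le_ncard hinter (hC.subset Set.inter_subset_left))

section Cross

variable {V : Type*} {Adj : V → V → Prop} {D D' : Set V}

lemma cross_inter_subset : Cross Adj (D ∩ D') ⊆ Cross Adj D ∪ Cross Adj D' := by
  rintro ⟨u, v⟩ ⟨huv, ⟨huD, huD'⟩, hv⟩
  by_cases hvD : v ∈ D
  · exact Or.inr ⟨huv, huD', fun hvD' => hv ⟨hvD, hvD'⟩⟩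
  · exact Or.inl ⟨huv, huD, hvD⟩

lemma cross_union_subset : Cross Adj (D ∪ D') ⊆ Cross Adj D ∪ Cross Adj D' := by
  rintro ⟨u, v⟩ ⟨huv, huD | huD', hv⟩
  · exact Or.inl ⟨huv, huD, fun h => hv (Or.inl h)⟩
  · exact Or.inr ⟨huv, huD', fun h => hv (Or.inr h)⟩

lemma cross_inter_inter_cross_union_subset :
    Cross Adj (D ∩ D') ∩ Cross Adj (D ∪ D') ⊆ Cross Adj D ∩ Cross Adj D' := by
  rintro ⟨u, v⟩ ⟨⟨huv, ⟨huD, huD'⟩, _⟩, ⟨_, _, hv⟩⟩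
  exact ⟨⟨huv, huD, fun h => hv (Or.inl h)⟩, ⟨huv, huD', fun h => hv (Or.inr h)⟩⟩

lemma ncard_cross_inter_add_ncard_cross_union_lt (hD : (Cross Adj D).Finite)
    (hD' : (Cross Adj D').Finite) {x y : V} (hxy : Adj x y) (hx : x ∈ D \ D')
    (hy : y ∈ D' \ D) :
    (Cross Adj (D ∩ D')).ncard + (Cross Adj (D ∪ D')).ncard <
      (Cross Adj D).ncard + (Cross Adj D').ncard := by
  refine Set.ncard_add_ncard_lt_of_union_ssubset ?_ cross_inter_inter_cross_union_subset hD hD'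
  refine Set.ssubset_iff_of_subset (Set.union_subset cross_inter_subset cross_union_subset)
    |>.mpr ⟨(x, y), Or.inl ⟨hxy, hx.1, hy.2⟩, ?_⟩
  rintro (⟨_, ⟨_, hxD'⟩, _⟩ | ⟨_, _, hyDD'⟩)
  · exact hx.2 hxD'
  · exact hyDD' (Or.inr hy.1)

end Cross

theorem stmt3_general {V : Type*} (Adj : V → V → Prop) (b : V) (I : Set V)
    (hlink : ∀ S : Finset V, ↑S ⊆ I → FinLinked Adj b S)
    (D D' : Set V) (hD : Exact Adj b I D) (hD' : Exact Adj b I D') :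
    ¬ ∃ x y : V, Adj x y ∧ x ∈ D \ D' ∧ y ∈ D' \ D := by
  rintro ⟨x, y, hxy, hx, hy⟩
  obtain ⟨hbD, hCD, hDI, hD⟩ := hD
  obtain ⟨hbD', hCD', hD'I, hD'⟩ := hD'
  have hCDD' : (Cross Adj D ∪ Cross Adj D').Finite := hCD.union hCD'
  have hinter := ncard_inter_le_ncard_cross hlink (X := D ∩ D') (fun h => hbD h.1)
    (hCDD'.subset cross_inter_subset)
  have hunion := ncard_inter_le_ncard_cross hlink (X := D ∪ D') (fun h => h.elim hbD hbD')
    (hCDD'.subset cross_union_subset)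
  have hmodular :
      ((D ∪ D') ∩ I).ncard + ((D ∩ D') ∩ I).ncard = (D ∩ I).ncard + (D' ∩ I).ncard := by
    rw [Set.union_inter_distrib_right, Set.inter_inter_distrib_right]
    exact Set.ncard_union_add_ncard_inter _ _ hDI hD'I
  have hlt := ncard_cross_inter_add_ncard_cross_union_lt hCD hCD' hxy hx hy
  omega

theorem stmt3 {V : Type*} (Adj : V → V → Prop) (b : V) (I : Set V) (hb : b ∉ I)
    (hlink : ∀ S : Finset V, ↑S ⊆ I → FinLinked Adj b S)
    (D D' : Set V) (hD : Exact Adj b I D) (hD' : Exact Adj b I D') :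
    ¬ ∃ x y : V, Adj x y ∧ x ∈ D \ D' ∧ y ∈ D' \ D :=
  stmt3_general Adj b I hlink D D' hD hD'
end

section
/- Let G be a digraph with vertex b and I ⊆ V(G) \ {b} such that every finite subset of I admits an edge-disjoint linkage to b. If D is an exact vertex set, then its hull D̂ is also exact; moreover I ∩ D̂ = I ∩ D. -/
/-- The hull of `D`: the set of vertices `v` such that every directed `v`–`b`
path contains a `D`-crossing edge. -/
def hull {V : Type*} (Adj : V → V → Prop) (b : V) (D : Set V) : Set V :=
  {v | ∀ P : DiPath Adj, P.first = v → P.last = b → ∃ e ∈ P.edges, e ∈ Cross Adj D}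

/-!
Edge-disjoint paths from a finite set `S ⊆ I ∩ hull D` to `b` each use a `D`-crossing edge,
so `|S| ≤ |Cross D|`. For `x ∈ I ∩ hull D \ D`, the set `S = (D ∩ I) ∪ {x}` violates this
bound when `D` is exact, so `hull D` contains no new vertex of `I`. Every crossing edge of
`hull D` crosses `D`, and the same bound applied to `hull D` (which lies in its own hull)
gives the reverse inequality `|hull D ∩ I| ≤ |Cross (hull D)|`.
-/

theorem Set.natCard_le_ncard_of_pairwise_disjoint {ι α : Type*} {F : ι → Set α} {E : Set α}
    (hE : E.Finite) (hF : Pairwise fun i j => Disjoint (F i) (F j))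
    (hmeet : ∀ i, (F i ∩ E).Nonempty) : Nat.card ι ≤ E.ncard := by
  choose f hf using hmeet
  have : Finite E := hE
  rw [← Nat.card_coe_set_eq]
  refine Nat.card_le_card_of_injective (fun i => ⟨f i, (hf i).2⟩) fun i j hij => ?_
  by_contra hne
  have hfij : f i = f j := congrArg Subtype.val hij
  exact Set.disjoint_left.mp (hF hne) (hf i).1 (hfij ▸ (hf j).1)

theorem List.zip_tail_subset_zip_cons {α : Type*} (a : α) (l : List α) :
    l.zip l.tail ⊆ (a :: l).zip l := by
  cases l with
  | nil => simp
  | cons c l => exact List.subset_cons_self _ _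

theorem List.zip_tail_subset_zip_tail_append {α : Type*} (s m : List α) :
    m.zip m.tail ⊆ (s ++ m).zip (s ++ m).tail := by
  induction s with
  | nil => exact List.Subset.refl _
  | cons a s ih => exact List.Subset.trans ih (List.zip_tail_subset_zip_cons a _)

namespace DiPath

variable {V : Type*} {Adj : V → V → Prop}

theorem exists_mem_edges_cross {A : Set V} (P : DiPath Adj) :
    P.first ∈ A → P.last ∉ A → ∃ e ∈ P.edges, e ∈ Cross Adj A := by
  obtain ⟨_ | ⟨a, l⟩, hne, hchain, hnodup⟩ := P
  · exact absurd rfl hne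
  simp only [first, last, edges, List.head_cons, List.tail_cons]
  intro hfirst hlast
  induction l generalizing a with
  | nil => exact absurd hfirst hlast
  | cons c l ih =>
    by_cases hc : c ∈ A
    · rw [List.getLast_cons (List.cons_ne_nil c l)] at hlast
      obtain ⟨e, he, hcross⟩ := ih c (List.cons_ne_nil c l) hchain.tail hnodup.of_cons hc hlast
      exact ⟨e, List.mem_cons_of_mem _ he, hcross⟩
    · exact ⟨(a, c), List.mem_cons_self .., (List.isChain_cons_cons.mp hchain).1, hfirst, hc⟩

theorem exists_suffix (P : DiPath Adj) {u : V} (hu : u ∈ P.verts) :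
    ∃ Q : DiPath Adj, Q.first = u ∧ Q.last = P.last ∧ Q.edgeSet ⊆ P.edgeSet := by
  obtain ⟨s, t, hst⟩ := List.append_of_mem hu
  have hchain : (s ++ u :: t).IsChain Adj := hst ▸ P.chain
  have hnodup : (s ++ u :: t).Nodup := hst ▸ P.nodup
  refine ⟨⟨u :: t, List.cons_ne_nil u t, hchain.right_of_append, hnodup.of_append_right⟩,
    rfl, ?_, ?_⟩
  · simp only [last, hst]
    exact (List.getLast_append_of_ne_nil _ _).symm
  · intro e he
    simp only [edgeSet, edges, hst] at he ⊢
    exact List.zip_tail_subset_zip_tail_append s _ he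

def cons (u : V) (P : DiPath Adj) (hadj : Adj u P.first) (hu : u ∉ P.verts) : DiPath Adj where
  verts := u :: P.verts
  ne := List.cons_ne_nil u P.verts
  chain := by
    obtain ⟨a, l, hal⟩ := List.exists_cons_of_ne_nil P.ne
    have hchain := P.chain
    simp only [first, hal, List.head_cons] at hadj hchain ⊢
    exact List.isChain_cons_cons.mpr ⟨hadj, hchain⟩
  nodup := List.nodup_cons.mpr ⟨hu, P.nodup⟩

theorem last_cons (u : V) (P : DiPath Adj) (hadj : Adj u P.first) (hu : u ∉ P.verts) :
    (P.cons u hadj hu).last = P.last :=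
  List.getLast_cons P.ne

theorem edges_cons (u : V) (P : DiPath Adj) (hadj : Adj u P.first) (hu : u ∉ P.verts) :
    (P.cons u hadj hu).edges = (u, P.first) :: P.edges := by
  obtain ⟨a, l, hal⟩ := List.exists_cons_of_ne_nil P.ne
  simp only [cons, edges, first, hal, List.head_cons, List.tail_cons, List.zip_cons_cons]

end DiPath

section Hull

variable {V : Type*} {Adj : V → V → Prop} {b : V}

theorem subset_hull {D : Set V} (hbD : b ∉ D) : D ⊆ hull Adj b D :=
  fun _ hv P hfirst hlast => P.exists_mem_edges_cross (hfirst ▸ hv) (hlast ▸ hbD)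

theorem notMem_hull (D : Set V) : b ∉ hull Adj b D := fun h => by
  obtain ⟨e, he, -⟩ := h ⟨[b], List.cons_ne_nil b [], List.isChain_singleton b,
    List.nodup_singleton b⟩ rfl rfl
  simp [DiPath.edges] at he

/-- If `u ∈ hull D`, `v ∉ hull D`, take a `v`–`b` path avoiding `Cross D`: its suffix from `u`
(if it meets `u`) or its extension by `uv` is a `u`–`b` path, so it must use `uv ∈ Cross D`. -/
theorem cross_hull_subset (D : Set V) : Cross Adj (hull Adj b D) ⊆ Cross Adj D := by
  rintro ⟨u, v⟩ ⟨hadj, hu, hv⟩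
  simp only [hull, Set.mem_ofPred_eq, not_forall, not_exists, not_and] at hv
  obtain ⟨P, rfl, hlast, hP⟩ := hv
  by_cases huP : u ∈ P.verts
  · obtain ⟨Q, hQfirst, hQlast, hQP⟩ := P.exists_suffix huP
    obtain ⟨e, he, hcross⟩ := hu Q hQfirst (hQlast.trans hlast)
    exact absurd hcross (hP e (hQP he))
  · obtain ⟨e, he, hcross⟩ := hu (P.cons u hadj huP) rfl ((P.last_cons u hadj huP).trans hlast)
    rw [DiPath.edges_cons, List.mem_cons] at he
    rcases he with rfl | he
    · exact hcross
    · exact absurd hcross (hP e he)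

theorem ncard_le_ncard_cross_of_subset_hull {I S D : Set V}
    (hlink : ∀ S : Finset V, ↑S ⊆ I → FinLinked Adj b S) (hS : S.Finite) (hSI : S ⊆ I)
    (hSD : S ⊆ hull Adj b D) (hD : (Cross Adj D).Finite) : S.ncard ≤ (Cross Adj D).ncard := by
  obtain ⟨P, hfirst, hlast, hdisj⟩ := hlink hS.toFinset (by simpa using hSI)
  calc S.ncard = Nat.card hS.toFinset := by simp [Set.ncard_eq_toFinset_card S hS]
    _ ≤ _ := Set.natCard_le_ncard_of_pairwise_disjoint hD hdisj fun s => ?_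
  exact hSD (hS.mem_toFinset.mp s.2) (P s) (hfirst s) (hlast s)

theorem inter_hull_eq_inter {I D : Set V}
    (hlink : ∀ S : Finset V, ↑S ⊆ I → FinLinked Adj b S) (hD : Exact Adj b I D) : I ∩ hull Adj b D = I ∩ D := by
  obtain ⟨hbD, hcross, hDI, hcard⟩ := hD
  refine Set.Subset.antisymm (fun x ⟨hxI, hxh⟩ => ⟨hxI, ?_⟩)
    (Set.inter_subset_inter_right I (subset_hull hbD))
  by_contra hxD
  have hle := ncard_le_ncard_cross_of_subset_hull hlink (hDI.insert x)
    (Set.insert_subset hxI Set.inter_subset_right)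
    (Set.insert_subset hxh (Set.inter_subset_left.trans (subset_hull hbD))) hcross
  rw [Set.ncard_insert_of_notMem (fun h => hxD h.1) hDI, hcard] at hle
  omega

end Hull

theorem stmt8_general {V : Type*} (Adj : V → V → Prop) (b : V) (I : Set V)
    (hlink : ∀ S : Finset V, ↑S ⊆ I → FinLinked Adj b S)
    (D : Set V) (hD : Exact Adj b I D) :
    Exact Adj b I (hull Adj b D) ∧ I ∩ hull Adj b D = I ∩ D := by
  have hI := inter_hull_eq_inter hlink hD
  obtain ⟨-, hcross, hDI, hcard⟩ := hD
  have hI' : hull Adj b D ∩ I = D ∩ I := by rw [Set.inter_comm, hI, Set.inter_comm]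
  have hcross_sub : Cross Adj (hull Adj b D) ⊆ Cross Adj D := cross_hull_subset D
  have hcross' := hcross.subset hcross_sub
  refine ⟨⟨notMem_hull D, hcross', hI' ▸ hDI, le_antisymm ?_ ?_⟩, hI⟩
  · rw [hI', ← hcard]
    exact Set.ncard_le_ncard hcross_sub hcross
  · exact ncard_le_ncard_cross_of_subset_hull hlink (hI' ▸ hDI) Set.inter_subset_right
      (Set.inter_subset_left.trans (subset_hull (notMem_hull D))) hcross'

theorem stmt8 {V : Type*} (Adj : V → V → Prop) (b : V) (I : Set V) (hb : b ∉ I)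
    (hlink : ∀ S : Finset V, ↑S ⊆ I → FinLinked Adj b S)
    (D : Set V) (hD : Exact Adj b I D) :
    Exact Adj b I (hull Adj b D) ∧ I ∩ hull Adj b D = I ∩ D :=
  stmt8_general Adj b I hlink D hD
end

section
/- Let G be a digraph with vertex b and I ⊆ V(G) \ {b} such that every finite subset of I admits an edge-disjoint linkage to b, and suppose G is exact (every vertex other than b lies in some exact set). Then for every finite set F of vertices there is an exact vertex set D with F \ {b} ⊆ D. -/
lemma list_cross {V : Type*} {Adj : V → V → Prop} {S : Set V} :
    ∀ (l : List V) (hne : l ≠ []), l.Chain' Adj → l.head hne ∈ S → l.getLast hne ∉ S →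
      ∃ e ∈ l.zip l.tail, e ∈ Cross Adj S
  | [], hne, _, _, _ => absurd rfl hne
  | [a], _, _, h1, h2 => absurd h1 h2
  | a :: b :: l, _, hc, h1, h2 => by
      by_cases hbS : b ∈ S
      · obtain ⟨e, he, hce⟩ := list_cross (b :: l) (by simp) hc.tail hbS (by simpa using h2)
        exact ⟨e, by simpa using Or.inr he, hce⟩
      · exact ⟨(a, b), by simp, (List.isChain_cons_cons.mp hc).1, h1, hbS⟩

/-- If a path starts in `S` and ends outside `S`, it has an `S`-crossing edge. -/
lemma path_cross {V : Type*} {Adj : V → V → Prop} {S : Set V} (P : DiPath Adj)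
    (h1 : P.first ∈ S) (h2 : P.last ∉ S) : ∃ e ∈ P.edges, e ∈ Cross Adj S :=
  list_cross P.verts P.ne P.chain h1 h2

/-- Lower bound: for any `S` not containing `b` with finite cut,
`|S ∩ I| ≤ |Cross S|` (and in particular `S ∩ I` is finite). -/
lemma cross_lower {V : Type*} (Adj : V → V → Prop) (b : V) (I : Set V)
    (hlink : ∀ S : Finset V, ↑S ⊆ I → FinLinked Adj b S) {S : Set V}
    (hbS : b ∉ S) (hfin : (Cross Adj S).Finite) :
    (S ∩ I).Finite ∧ (S ∩ I).ncard ≤ (Cross Adj S).ncard := by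
  have key : ∀ T : Finset V, ↑T ⊆ S ∩ I → T.card ≤ (Cross Adj S).ncard := by
    intro T hT
    obtain ⟨P, hfirst, hlast, hdisj⟩ := hlink T (fun x hx => (hT hx).2)
    have hcr : ∀ t : T, ∃ e ∈ (P t).edges, e ∈ Cross Adj S := by
      intro t
      refine path_cross (P t) ?_ ?_
      · rw [hfirst t]; exact (hT t.2).1
      · rw [hlast t]; exact hbS
    choose e he hce using hcr
    have hinj : Set.InjOn e (T.attach : Finset {x // x ∈ T}) := by
      intro s _ t _ hst
      by_contra hne
      exact Set.disjoint_left.mp (hdisj s t hne) (he s) (hst ▸ he t)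
    calc T.card = T.attach.card := Finset.card_attach.symm
      _ ≤ hfin.toFinset.card := by
          refine Finset.card_le_card_of_injOn e (fun t _ => ?_) hinj
          simpa using hce t
      _ = (Cross Adj S).ncard := (Set.ncard_eq_toFinset_card _ hfin).symm
  have hSI : (S ∩ I).Finite := by
    by_contra h
    obtain ⟨T, hT, hcard⟩ :=
      Set.Infinite.exists_subset_card_eq h ((Cross Adj S).ncard + 1)
    have := key T hT
    omega
  refine ⟨hSI, ?_⟩
  have := key hSI.toFinset (by simp)
  simpa [Set.ncard_eq_toFinset_card _ hSI] using this

/-- The union of two exact sets is exact. -/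
lemma exact_union {V : Type*} {Adj : V → V → Prop} {b : V} {I : Set V}
    (hlink : ∀ S : Finset V, ↑S ⊆ I → FinLinked Adj b S) {D D' : Set V}
    (hD : Exact Adj b I D) (hD' : Exact Adj b I D') : Exact Adj b I (D ∪ D') := by
  obtain ⟨hb1, hc1, hi1, he1⟩ := hD
  obtain ⟨hb2, hc2, hi2, he2⟩ := hD'
  -- cut sets of union and intersection sit inside the union of the cuts
  have hAsub : Cross Adj (D ∪ D') ⊆ Cross Adj D ∪ Cross Adj D' := by
    rintro ⟨u, w⟩ ⟨ha, hu, hw⟩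
    rcases hu with hu | hu
    · exact Or.inl ⟨ha, hu, fun h => hw (Or.inl h)⟩
    · exact Or.inr ⟨ha, hu, fun h => hw (Or.inr h)⟩
  have hAiB : Cross Adj (D ∪ D') ∩ Cross Adj (D ∩ D') ⊆ Cross Adj D ∩ Cross Adj D' := by
    rintro ⟨u, w⟩ ⟨⟨ha, _, hw⟩, ⟨_, hu', _⟩⟩
    exact ⟨⟨ha, hu'.1, fun h => hw (Or.inl h)⟩, ⟨ha, hu'.2, fun h => hw (Or.inr h)⟩⟩
  have hAuB : Cross Adj (D ∪ D') ∪ Cross Adj (D ∩ D') ⊆ Cross Adj D ∪ Cross Adj D' := by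
    refine Set.union_subset hAsub ?_
    rintro ⟨u, w⟩ ⟨ha, hu, hw⟩
    by_cases h : w ∈ D
    · exact Or.inr ⟨ha, hu.2, fun h' => hw ⟨h, h'⟩⟩
    · exact Or.inl ⟨ha, hu.1, h⟩
  have hA : (Cross Adj (D ∪ D')).Finite := (hc1.union hc2).subset hAsub
  have hB : (Cross Adj (D ∩ D')).Finite :=
    (hc1.union hc2).subset fun e he => hAuB (Or.inr he)
  -- submodularity of the cut function
  have hsub : (Cross Adj (D ∪ D')).ncard + (Cross Adj (D ∩ D')).ncard ≤
      (Cross Adj D).ncard + (Cross Adj D').ncard := by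
    rw [← Set.ncard_union_add_ncard_inter _ _ hA hB,
        ← Set.ncard_union_add_ncard_inter _ _ hc1 hc2]
    exact Nat.add_le_add (Set.ncard_le_ncard hAuB (hc1.union hc2))
      (Set.ncard_le_ncard hAiB (hc1.inter_of_left _))
  -- lower bounds from the linkage condition
  have hbU : b ∉ D ∪ D' := fun h => h.elim hb1 hb2
  obtain ⟨hiU, hlbU⟩ := cross_lower Adj b I hlink hbU hA
  obtain ⟨hiI, hlbI⟩ := cross_lower Adj b I hlink (fun h => hb1 h.1) hB
  -- cardinal identity for intersections with I
  have hid : ((D ∪ D') ∩ I).ncard + ((D ∩ D') ∩ I).ncard =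
      (D ∩ I).ncard + (D' ∩ I).ncard := by
    have e1 : (D ∪ D') ∩ I = (D ∩ I) ∪ (D' ∩ I) := Set.union_inter_distrib_right ..
    have e2 : (D ∩ D') ∩ I = (D ∩ I) ∩ (D' ∩ I) := by ext x; simp; tauto
    rw [e1, e2, Set.ncard_union_add_ncard_inter _ _ hi1 hi2]
  refine ⟨hbU, hA, hiU, ?_⟩
  rw [he1, he2] at hsub
  omega

theorem stmt9 {V : Type*} (Adj : V → V → Prop) (b : V) (I : Set V) (hb : b ∉ I)
    (hlink : ∀ S : Finset V, ↑S ⊆ I → FinLinked Adj b S)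
    (hexact : ∀ v : V, v ≠ b → ∃ D : Set V, Exact Adj b I D ∧ v ∈ D) :
    ∀ F : Finset V, ∃ D : Set V, Exact Adj b I D ∧ ↑F \ {b} ⊆ D := by
  intro F
  classical
  induction F using Finset.induction_on with
  | empty =>
      refine ⟨∅, ⟨Set.notMem_empty b, ?_, ?_, ?_⟩, by simp⟩
      · convert Set.finite_empty
        ext e; simp [Cross]
      · simp
      · simp [show Cross Adj (∅ : Set V) = ∅ by ext e; simp [Cross]]
  | @insert a F' ha ih =>
      obtain ⟨D, hD, hFD⟩ := ih
      by_cases hab : a = b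
      · refine ⟨D, hD, ?_⟩
        intro x hx
        refine hFD ⟨?_, hx.2⟩
        rcases Finset.mem_insert.mp (by exact_mod_cast hx.1) with h | h
        · exact absurd (h.trans hab) hx.2
        · exact_mod_cast h
      · obtain ⟨D', hD', haD'⟩ := hexact a hab
        refine ⟨D ∪ D', exact_union hlink hD hD', ?_⟩
        intro x hx
        rcases Finset.mem_insert.mp (by exact_mod_cast hx.1) with h | h
        · exact Or.inr (h ▸ haD')
        · exact Or.inl (hFD ⟨by exact_mod_cast h, hx.2⟩)
end
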